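/- Let D be an integral domain with quotient field K, A a finitely generated torsion-free D-algebra, B = A ⊗_D K, with A ∩ K = D under the canonical embeddings into B, and let S ⊆ A. Then S is a left ringset (i.e., Int^l_B(S,A) = {F ∈ B[x] : F_l(s) ∈ A for all s ∈ S} is closed under multiplication) if and only if, for every nonzero d ∈ D, the set N^l_{(A mod dA)}(S) = {f ∈ A[x] : f_l(s) ∈ dA for all s ∈ S} is a left ideal of A[x]. -/

import Mathlib

open Polynomial TensorProduct

/-- The left polynomial function `f_l : R → R`, `f_l(s) = ∑ k, s ^ k * c_k`,
where `f = ∑ k, c_k x^k`. -/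
def leftEval {R : Type*} [Semiring R] (f : R[X]) (s : R) : R :=
  f.sum fun k c => s ^ k * c

/-- The set `Int^l_B(S,A)` of left integer-valued polynomials on `S ⊆ A`, where
`B = A ⊗_D K` and `A` is embedded in `B` via `a ↦ a ⊗ 1`. -/
def IntLeft (D K A : Type*) [CommRing D] [Field K] [Algebra D K]
    [Ring A] [Algebra D A] (S : Set A) : Set (A ⊗[D] K)[X] :=
  {F : (A ⊗[D] K)[X] | ∀ s ∈ S,
    leftEval F (Algebra.TensorProduct.includeLeftRingHom (R := D) (B := K) s) ∈
      Set.range (Algebra.TensorProduct.includeLeftRingHom (R := D) (A := A) (B := K))}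

/-- A subset `N` of a (possibly noncommutative) ring is a left ideal:
an additive subgroup closed under multiplication from the left. -/
def IsLeftIdealSet {R : Type*} [Ring R] (N : Set R) : Prop :=
  0 ∈ N ∧ (∀ a ∈ N, ∀ b ∈ N, a + b ∈ N) ∧ (∀ a ∈ N, -a ∈ N) ∧
    ∀ g : R, ∀ a ∈ N, g * a ∈ N

/-!
Write `B = A ⊗_D K`, a localization of `A` at `D \ {0}` into which `A` embeds. Every `F ∈ B[X]`
has a common denominator, `c • F = f` with `0 ≠ c ∈ D` and `f ∈ A[X]`, and then `F ∈ Int^l` iff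
`f ∈ N_c := N^l_{(A mod cA)}(S)`. Left evaluation is not multiplicative, but
`(f g)_l(s) = (f_l(s) g)_l(s)`. So if every `N_e` is a left ideal, `f_l(s) = c a` gives
`(f g)_l(s) = c (a g)_l(s) ∈ c e A`, i.e. `F G ∈ Int^l`. Conversely, for `f ∈ N_d` the polynomial
`d⁻¹ f` lies in `Int^l`, and so does every `g ∈ A[X]`; hence `g d⁻¹ f = d⁻¹ (g f) ∈ Int^l` when
`Int^l` is a ring, i.e. `g f ∈ N_d`.
-/

section LeftEval

variable {R : Type*}

theorem leftEval_zero [Semiring R] (s : R) : leftEval (0 : R[X]) s = 0 :=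
  sum_zero_index _

theorem leftEval_add [Semiring R] (f g : R[X]) (s : R) :
    leftEval (f + g) s = leftEval f s + leftEval g s :=
  sum_add_index f g _ (fun _ => mul_zero _) (fun _ _ _ => mul_add _ _ _)

theorem leftEval_monomial [Semiring R] (n : ℕ) (c s : R) :
    leftEval (monomial n c) s = s ^ n * c :=
  sum_monomial_index c _ (mul_zero _)

theorem leftEval_neg [Ring R] (f : R[X]) (s : R) : leftEval (-f) s = -leftEval f s :=
  eq_neg_of_add_eq_zero_left (by rw [← leftEval_add, neg_add_cancel, leftEval_zero])

theorem leftEval_smul {D : Type*} [Semiring R] [Monoid D] [DistribMulAction D R]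
    [SMulCommClass D R R] (d : D) (f : R[X]) (s : R) :
    leftEval (d • f) s = d • leftEval f s := by
  induction f using Polynomial.induction_on' with
  | add f g hf hg => rw [smul_add, leftEval_add, leftEval_add, hf, hg, smul_add]
  | monomial n c => rw [smul_monomial, leftEval_monomial, leftEval_monomial, mul_smul_comm]

theorem leftEval_map {R' F : Type*} [Semiring R] [Semiring R'] [FunLike F R R']
    [RingHomClass F R R'] (φ : F) (f : R[X]) (s : R) :
    leftEval (f.map (φ : R →+* R')) (φ s) = φ (leftEval f s) := by
  induction f using Polynomial.induction_on' with
  | add f g hf hg => rw [Polynomial.map_add, leftEval_add, leftEval_add, hf, hg, map_add]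
  | monomial n c =>
    rw [map_monomial, leftEval_monomial, leftEval_monomial, map_mul, map_pow, RingHom.coe_coe]

theorem leftEval_mul [Semiring R] (f g : R[X]) (s : R) :
    leftEval (f * g) s = leftEval (C (leftEval f s) * g) s := by
  induction f using Polynomial.induction_on' with
  | add f f' hf hf' =>
    rw [add_mul, leftEval_add, hf, hf', leftEval_add, map_add, add_mul, leftEval_add]
  | monomial n c =>
    induction g using Polynomial.induction_on' with
    | add g g' hg hg' => rw [mul_add, leftEval_add, hg, hg', mul_add, leftEval_add]
    | monomial m b =>
      rw [monomial_mul_monomial, leftEval_monomial, leftEval_monomial, C_mul_monomial,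
        leftEval_monomial, pow_add, pow_mul_comm, mul_assoc, mul_assoc]

end LeftEval

theorem isLeftIdealSet_iff {R : Type*} [Ring R] (N : AddSubgroup R) :
    IsLeftIdealSet (N : Set R) ↔ ∀ g : R, ∀ a ∈ N, g * a ∈ N :=
  ⟨fun h => h.2.2.2, fun h => ⟨N.zero_mem, fun _ ha _ hb => N.add_mem ha hb, fun _ => N.neg_mem, h⟩⟩

section LeftNullMod

variable {D A : Type*} [CommRing D] [Ring A] [Algebra D A]

/-- `N^l_{(A mod dA)}(S)`. -/
def leftNullMod (S : Set A) (d : D) : AddSubgroup A[X] where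
  carrier := {f | ∀ s ∈ S, ∃ a : A, d • a = leftEval f s}
  zero_mem' _ _ := ⟨0, by rw [smul_zero, leftEval_zero]⟩
  add_mem' {f g} hf hg s hs := by
    obtain ⟨a, ha⟩ := hf s hs
    obtain ⟨b, hb⟩ := hg s hs
    exact ⟨a + b, by rw [smul_add, ha, hb, leftEval_add]⟩
  neg_mem' {f} hf s hs := by
    obtain ⟨a, ha⟩ := hf s hs
    exact ⟨-a, by rw [smul_neg, ha, leftEval_neg]⟩

theorem mul_mem_leftNullMod_mul {S : Set A} {c e : D} {f g : A[X]} (hf : f ∈ leftNullMod S c)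
    (hg : ∀ a : A, C a * g ∈ leftNullMod S e) : f * g ∈ leftNullMod S (c * e) := by
  intro s hs
  obtain ⟨a, ha⟩ := hf s hs
  obtain ⟨b, hb⟩ := hg a s hs
  refine ⟨b, ?_⟩
  show (c * e) • b = leftEval (f * g) s
  rw [leftEval_mul, ← ha, ← smul_C, smul_mul_assoc, leftEval_smul, ← hb, mul_smul]

end LeftNullMod

section LeftIntegerValued

variable {D A B : Type*} [CommRing D] [Ring A] [Ring B] [Algebra D A] [Algebra D B]

/-- `Int^l_B(S, A)`, for an arbitrary `D`-algebra map `ι : A → B` in place of `A → A ⊗_D K`. -/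
def leftIntegerValued (ι : A →ₐ[D] B) (S : Set A) : Set B[X] :=
  {F | ∀ s ∈ S, leftEval F (ι s) ∈ Set.range ι}

theorem map_mem_leftIntegerValued (ι : A →ₐ[D] B) (S : Set A) (f : A[X]) :
    f.map (ι : A →+* B) ∈ leftIntegerValued ι S :=
  fun s _ => ⟨leftEval f s, (leftEval_map ι f s).symm⟩

theorem mem_leftIntegerValued_iff_mem_leftNullMod {ι : A →ₐ[D] B} (hι : Function.Injective ι)
    {S : Set A} {c : D} (hc : IsSMulRegular B c) {F : B[X]} {f : A[X]}
    (hF : c • F = f.map (ι : A →+* B)) :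
    F ∈ leftIntegerValued ι S ↔ f ∈ leftNullMod S c := by
  have key (s a : A) : leftEval F (ι s) = ι a ↔ c • a = leftEval f s := by
    rw [← hc.eq_iff, ← leftEval_smul, hF, leftEval_map, ← map_smul, hι.eq_iff, eq_comm]
  exact forall₂_congr fun s _ => exists_congr fun a => eq_comm.trans (key s a)

theorem exists_smul_eq_map (M : Submonoid D) (ι : A →ₐ[D] B) [IsLocalizedModule M ι.toLinearMap]
    (F : B[X]) : ∃ c ∈ M, ∃ f : A[X], c • F = f.map (ι : A →+* B) := by
  induction F using Polynomial.induction_on' with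
  | add F G hF hG =>
    obtain ⟨c, hc, f, hf⟩ := hF
    obtain ⟨e, he, g, hg⟩ := hG
    refine ⟨c * e, M.mul_mem hc he, e • f + c • g, ?_⟩
    rw [← coe_mapAlgHom, map_add, map_smul, map_smul, coe_mapAlgHom, ← hf, ← hg, smul_add,
      smul_smul, smul_smul, mul_comm e c]
  | monomial n b =>
    obtain ⟨⟨a, c⟩, hc⟩ := IsLocalizedModule.surj M ι.toLinearMap b
    exact ⟨c, c.2, monomial n a, by rw [map_monomial, smul_monomial]; congr 1⟩

theorem forall_mul_mem_leftIntegerValued_iff (M : Submonoid D) (ι : A →ₐ[D] B)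
    [IsLocalizedModule M ι.toLinearMap] (hι : Function.Injective ι) (S : Set A) :
    (∀ F ∈ leftIntegerValued ι S, ∀ G ∈ leftIntegerValued ι S, F * G ∈ leftIntegerValued ι S) ↔
      ∀ d ∈ M, ∀ g : A[X], ∀ f ∈ leftNullMod S d, g * f ∈ leftNullMod S d := by
  have transfer {c : D} (hc : c ∈ M) {F : B[X]} {f : A[X]} (h : c • F = f.map (ι : A →+* B)) :
      F ∈ leftIntegerValued ι S ↔ f ∈ leftNullMod S c :=
    mem_leftIntegerValued_iff_mem_leftNullMod hι
      (IsLocalizedModule.smul_injective ι.toLinearMap ⟨c, hc⟩) h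
  constructor
  · intro hmul d hd g f hf
    obtain ⟨u, hu⟩ : ∃ u : B, d • u = 1 :=
      ((Module.End.isUnit_iff _).mp (IsLocalizedModule.map_units ι.toLinearMap ⟨d, hd⟩)).2 1
    have hdF : d • (C u * f.map (ι : A →+* B)) = f.map (ι : A →+* B) := by
      rw [← smul_mul_assoc, smul_C, hu, C_1, one_mul]
    have hF := (transfer hd hdF).mpr hf
    refine (transfer hd ?_).mp (hmul _ (map_mem_leftIntegerValued ι S g) _ hF)
    rw [← mul_smul_comm, hdF, Polynomial.map_mul]
  · intro hideal F hF G hG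
    obtain ⟨c, hc, f, hcF⟩ := exists_smul_eq_map M ι F
    obtain ⟨e, he, g, heG⟩ := exists_smul_eq_map M ι G
    have hFG : (c * e) • (F * G) = (f * g).map (ι : A →+* B) := by
      rw [Polynomial.map_mul, ← hcF, ← heG, smul_mul_smul_comm]
    rw [transfer (M.mul_mem hc he) hFG]
    exact mul_mem_leftNullMod_mul ((transfer hc hcF).mp hF) fun a =>
      hideal e he (C a) g ((transfer he heG).mp hG)

end LeftIntegerValued

section TensorProduct

variable {D A : Type*} [CommRing D] [Semiring A] [Algebra D A]

instance isLocalizedModule_includeLeft (M : Submonoid D) (K : Type*) [CommRing K] [Algebra D K]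
    [IsLocalization M K] :
    IsLocalizedModule M (Algebra.TensorProduct.includeLeft : A →ₐ[D] A ⊗[D] K).toLinearMap := by
  have : (Algebra.TensorProduct.includeLeft : A →ₐ[D] A ⊗[D] K).toLinearMap =
      (TensorProduct.comm D K A).toLinearMap ∘ₗ TensorProduct.mk D K A 1 := rfl
  rw [this]
  infer_instance

theorem includeLeft_injective_of_isTorsionFree [Module.IsTorsionFree D A] (K : Type*)
    [CommRing K] [Algebra D K] [IsFractionRing D K] :
    Function.Injective (Algebra.TensorProduct.includeLeft : A →ₐ[D] A ⊗[D] K) :=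
  (IsLocalizedModule.injective_iff_isRegular (nonZeroDivisors D)
    (Algebra.TensorProduct.includeLeft : A →ₐ[D] A ⊗[D] K).toLinearMap).mpr fun c =>
      (isRegular_iff_mem_nonZeroDivisors.mpr c.2).isSMulRegular

end TensorProduct

theorem leftRingset_iff_leftNullIdealSet_mod_general
    (D : Type*) [CommRing D] [IsDomain D]
    (K : Type*) [Field K] [Algebra D K] [IsFractionRing D K]
    (A : Type*) [Ring A] [Algebra D A] [NoZeroSMulDivisors D A]
    (S : Set A) :
    (∀ F ∈ IntLeft D K A S, ∀ G ∈ IntLeft D K A S, F * G ∈ IntLeft D K A S) ↔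
    (∀ d : D, d ≠ 0 →
      IsLeftIdealSet {f : A[X] | ∀ s ∈ S, leftEval f s ∈ Set.range (fun a : A => d • a)}) := by
  have key := forall_mul_mem_leftIntegerValued_iff (nonZeroDivisors D)
    (Algebra.TensorProduct.includeLeft : A →ₐ[D] A ⊗[D] K)
    (includeLeft_injective_of_isTorsionFree K) S
  simp only [mem_nonZeroDivisors_iff_ne_zero] at key
  exact key.trans (forall₂_congr fun d _ => (isLeftIdealSet_iff (leftNullMod S d)).symm)

/-- Theorem (link, left version): `S ⊆ A` is a left ringset iff, for every nonzero `d ∈ D`,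
`N^l_{(A mod dA)}(S) = {f ∈ A[x] : f_l(s) ∈ dA for all s ∈ S}` is a left ideal of `A[x]`. -/
theorem leftRingset_iff_leftNullIdealSet_mod
    (D : Type*) [CommRing D] [IsDomain D]
    (K : Type*) [Field K] [Algebra D K] [IsFractionRing D K]
    (A : Type*) [Ring A] [Algebra D A] [Module.Finite D A] [NoZeroSMulDivisors D A]
    (hAK : ∀ b : A ⊗[D] K,
      b ∈ Set.range (Algebra.TensorProduct.includeLeftRingHom (R := D) (A := A) (B := K)) →
      b ∈ Set.range (Algebra.TensorProduct.includeRight (R := D) (A := A) (B := K)) →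
      b ∈ Set.range (algebraMap D (A ⊗[D] K)))
    (S : Set A) :
    (∀ F ∈ IntLeft D K A S, ∀ G ∈ IntLeft D K A S, F * G ∈ IntLeft D K A S) ↔
    (∀ d : D, d ≠ 0 →
      IsLeftIdealSet {f : A[X] | ∀ s ∈ S, leftEval f s ∈ Set.range (fun a : A => d • a)}) :=
  leftRingset_iff_leftNullIdealSet_mod_general D K A S
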